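/- arXiv:2310.02175 — 2 statements merged into one kernel-verified Lean document; each statement's English description precedes it below -/
import Mathlib

section
/- For every u ∈ ℝ, ∫_0^u exp(−(s² − u²)/2) ds = ∑_{n=0}^∞ (2^n · n!/(2n+1)!) · u^{2n+1}. -/
/-!
Since `exp ((u² - s²) / 2) = ∑ (u² - s²)ⁿ / (2ⁿ n!)` and `|u² - s²| ≤ u²` for `s` between `0` and
`u`, the series is dominated on the interval of integration by the convergent constant series
`∑ (u² / 2)ⁿ / n!`, so it may be integrated term by term. Integration by parts gives the reduction
`(2n + 3) Iₙ₊₁ = (2n + 2) u² Iₙ` for `Iₙ = ∫₀ᵘ (u² - s²)ⁿ ds`, whence Wallis' formula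
`Iₙ = 4ⁿ (n!)² / (2n + 1)! · u²ⁿ⁺¹`, and dividing by `2ⁿ n!` gives the coefficients.
-/

open MeasureTheory intervalIntegral Set Nat
open scoped Interval

-- The derivative of `s (u² - s²)ⁿ⁺¹` is rewritten with `s² = u² - (u² - s²)`, so that it stays
-- in the span of the integrands `(u² - s²)ᵏ`.
lemma hasDerivAt_mul_sq_sub_sq_pow_succ (u x : ℝ) (n : ℕ) :
    HasDerivAt (fun s : ℝ => s * (u ^ 2 - s ^ 2) ^ (n + 1))
      ((2 * n + 3) * (u ^ 2 - x ^ 2) ^ (n + 1) - (2 * n + 2) * u ^ 2 * (u ^ 2 - x ^ 2) ^ n) x := by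
  have h := (hasDerivAt_id' x).fun_mul (((hasDerivAt_pow 2 x).const_sub (u ^ 2)).fun_pow (n + 1))
  refine h.congr_deriv ?_
  rw [Nat.add_sub_cancel]
  push_cast
  ring

lemma integral_sq_sub_sq_pow_succ (u : ℝ) (n : ℕ) :
    (2 * n + 3) * ∫ s in (0:ℝ)..u, (u ^ 2 - s ^ 2) ^ (n + 1)
      = (2 * n + 2) * u ^ 2 * ∫ s in (0:ℝ)..u, (u ^ 2 - s ^ 2) ^ n := by
  have h := integral_eq_sub_of_hasDerivAt (a := 0) (b := u)
    (fun x _ => hasDerivAt_mul_sq_sub_sq_pow_succ u x n)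
    (by apply Continuous.intervalIntegrable; fun_prop)
  rw [intervalIntegral.integral_sub (by apply Continuous.intervalIntegrable; fun_prop)
    (by apply Continuous.intervalIntegrable; fun_prop), intervalIntegral.integral_const_mul,
    intervalIntegral.integral_const_mul] at h
  simp only [sub_self, ne_eq, add_eq_zero, one_ne_zero, and_false, not_false_eq_true,
    zero_pow, mul_zero] at h
  linarith

lemma integral_sq_sub_sq_pow (u : ℝ) (n : ℕ) :
    ∫ s in (0:ℝ)..u, (u ^ 2 - s ^ 2) ^ n
      = 4 ^ n * (n ! : ℝ) ^ 2 / (2 * n + 1)! * u ^ (2 * n + 1) := by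
  induction n with
  | zero => simp
  | succ n ih =>
    have h := integral_sq_sub_sq_pow_succ u n
    rw [ih] at h
    have h3 : (2 * n + 3 : ℝ) ≠ 0 := by positivity
    have hfac : ((2 * (n + 1) + 1)! : ℝ) = (2 * n + 3) * (2 * n + 2) * (2 * n + 1)! := by
      rw [show 2 * (n + 1) + 1 = 2 * n + 1 + 1 + 1 by ring, factorial_succ, factorial_succ]
      push_cast
      ring
    rw [← mul_right_inj' h3, h, hfac, factorial_succ n]
    push_cast
    field_simp
    ring

lemma hasSum_pow_div_two_pow_mul_factorial (x : ℝ) :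
    HasSum (fun n : ℕ => x ^ n / (2 ^ n * n !)) (Real.exp (x / 2)) := by
  rw [Real.exp_eq_exp_ℝ]
  simpa only [div_pow, div_div] using NormedSpace.expSeries_div_hasSum_exp (x / 2)

lemma abs_sq_sub_sq_le_sq {u s : ℝ} (hs : s ∈ Ι 0 u) : |u ^ 2 - s ^ 2| ≤ u ^ 2 := by
  have hsu : s ^ 2 ≤ u ^ 2 := by
    rcases mem_uIoc.1 hs with ⟨h0, hu⟩ | ⟨hu, h0⟩ <;> nlinarith
  rw [abs_of_nonneg (by linarith)]
  linarith [sq_nonneg s]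

lemma norm_sq_sub_sq_pow_div_le {u s : ℝ} (hs : s ∈ Ι 0 u) (n : ℕ) :
    ‖(u ^ 2 - s ^ 2) ^ n / (2 ^ n * n !)‖ ≤ (u ^ 2 / 2) ^ n / n ! := by
  rw [norm_div, norm_pow, Real.norm_eq_abs, Real.norm_of_nonneg (by positivity), div_pow,
    div_div]
  gcongr
  exact abs_sq_sub_sq_le_sq hs

theorem stmt_6 (u : ℝ) :
    ∫ s in (0:ℝ)..u, Real.exp (-(s ^ 2 - u ^ 2) / 2)
      = ∑' n : ℕ, (2 ^ n * (n.factorial : ℝ) / ((2 * n + 1).factorial : ℝ)) * u ^ (2 * n + 1) := by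
  have hsum : HasSum (fun n : ℕ => ∫ s in (0:ℝ)..u, (u ^ 2 - s ^ 2) ^ n / (2 ^ n * n !))
      (∫ s in (0:ℝ)..u, Real.exp (-(s ^ 2 - u ^ 2) / 2)) :=
    hasSum_integral_of_dominated_convergence (fun n _ => (u ^ 2 / 2) ^ n / n !)
      (fun n => by apply Continuous.aestronglyMeasurable; fun_prop)
      (fun n => ae_of_all _ fun s hs => norm_sq_sub_sq_pow_div_le hs n)
      (ae_of_all _ fun _ _ => Real.summable_pow_div_factorial _)
      intervalIntegrable_const
      (ae_of_all _ fun s _ => by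
        simpa [neg_sub] using hasSum_pow_div_two_pow_mul_factorial (u ^ 2 - s ^ 2))
  rw [← hsum.tsum_eq]
  refine tsum_congr fun n => ?_
  rw [intervalIntegral.integral_div, integral_sq_sub_sq_pow,
    show (4 : ℝ) ^ n = 2 ^ n * 2 ^ n by rw [← mul_pow]; norm_num]
  field_simp
end

section
/- For every p, m ≥ 1 and every i ≥ 1, with β_i := √((im)!·((i+1)m)!)/((im−p)!) (assuming im ≥ p), one has β_{i−1}·β_{i+1} ≤ β_i² for all sufficiently large i. -/
open Finset

lemma fact_add (n t : ℕ) : (n + t).factorial = n.factorial * ∏ j ∈ Finset.range t, (n + 1 + j) := by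
  induction t with
  | zero => simp
  | succ t ih =>
    rw [Finset.prod_range_succ, ← Nat.add_assoc, Nat.factorial_succ, ih]
    ring

lemma term_ineq (p m x : ℕ) :
    (x + p + 2 * m) * x ^ 2 ≤ (x + p) * (x + m) ^ 2 := by
  have h : (x + p) * (x + m) ^ 2 =
      (x + p + 2 * m) * x ^ 2 + (m ^ 2 * x + 2 * p * m * x + p * m ^ 2) := by ring
  rw [h]; exact Nat.le_add_right _ _

lemma key (p m c : ℕ) :
    (c + p).factorial * (c + p + 3 * m).factorial * ((c + m).factorial) ^ 4 ≤
      (c + p + m).factorial * (c + p + 2 * m).factorial * (c.factorial) ^ 2 *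
        ((c + 2 * m).factorial) ^ 2 := by
  have h3 : (c + p + 3 * m).factorial
      = (c + p + 2 * m).factorial * ∏ j ∈ range m, (c + p + 2 * m + 1 + j) := by
    have : c + p + 3 * m = (c + p + 2 * m) + m := by ring
    rw [this, fact_add]
  have h1 : (c + p + m).factorial
      = (c + p).factorial * ∏ j ∈ range m, (c + p + 1 + j) := fact_add _ _
  have hr : (c + m).factorial = c.factorial * ∏ j ∈ range m, (c + 1 + j) := fact_add _ _
  have hs : (c + 2 * m).factorial
      = (c + m).factorial * ∏ j ∈ range m, (c + m + 1 + j) := by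
    have : c + 2 * m = (c + m) + m := by ring
    rw [this, fact_add]
  rw [h3, h1, hs, hr]
  have hprod : (∏ j ∈ range m, (c + p + 2 * m + 1 + j)) * (∏ j ∈ range m, (c + 1 + j)) ^ 2 ≤
      (∏ j ∈ range m, (c + p + 1 + j)) * (∏ j ∈ range m, (c + m + 1 + j)) ^ 2 := by
    rw [← Finset.prod_pow, ← Finset.prod_mul_distrib, ← Finset.prod_pow,
      ← Finset.prod_mul_distrib]
    apply Finset.prod_le_prod'
    intro j _
    have := term_ineq p m (c + 1 + j)
    calc (c + p + 2 * m + 1 + j) * (c + 1 + j) ^ 2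
        = ((c + 1 + j) + p + 2 * m) * (c + 1 + j) ^ 2 := by ring
      _ ≤ ((c + 1 + j) + p) * ((c + 1 + j) + m) ^ 2 := this
      _ = (c + p + 1 + j) * (c + m + 1 + j) ^ 2 := by ring
  calc (c + p).factorial *
        ((c + p + 2 * m).factorial * ∏ j ∈ range m, (c + p + 2 * m + 1 + j)) *
        (c.factorial * ∏ j ∈ range m, (c + 1 + j)) ^ 4
      = ((c + p).factorial * (c + p + 2 * m).factorial * c.factorial ^ 4 *
          (∏ j ∈ range m, (c + 1 + j)) ^ 2) *
        ((∏ j ∈ range m, (c + p + 2 * m + 1 + j)) * (∏ j ∈ range m, (c + 1 + j)) ^ 2) := by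
        ring
    _ ≤ ((c + p).factorial * (c + p + 2 * m).factorial * c.factorial ^ 4 *
          (∏ j ∈ range m, (c + 1 + j)) ^ 2) *
        ((∏ j ∈ range m, (c + p + 1 + j)) * (∏ j ∈ range m, (c + m + 1 + j)) ^ 2) := by
        exact Nat.mul_le_mul_left _ hprod
    _ = (c + p).factorial * (∏ j ∈ range m, (c + p + 1 + j)) * (c + p + 2 * m).factorial *
        c.factorial ^ 2 *
        (c.factorial * (∏ j ∈ range m, (c + 1 + j)) * ∏ j ∈ range m, (c + m + 1 + j)) ^ 2 := by
        ring

theorem stmt_19 (p m : ℕ) (hp : 1 ≤ p) (hm : 1 ≤ m)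
    (β : ℕ → ℝ)
    (hβ : ∀ i : ℕ, β i = Real.sqrt (((i * m).factorial : ℝ) * (((i + 1) * m).factorial : ℝ))
      / (((i * m - p).factorial : ℝ))) :
    ∃ N : ℕ, ∀ i : ℕ, N ≤ i → β (i - 1) * β (i + 1) ≤ (β i) ^ 2 := by
  refine ⟨p + 1, fun i hi => ?_⟩
  obtain ⟨k, rfl⟩ : ∃ k, i = k + 1 := ⟨i - 1, by omega⟩
  have hk : p ≤ k := by omega
  have hc : p ≤ k * m := le_trans hk (Nat.le_mul_of_pos_right k (by omega))
  set c := k * m - p with hcdef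
  have hkm : k * m = c + p := by omega
  -- index facts
  have e0 : (k + 1 - 1) = k := by omega
  -- squares of β
  have sqβ : ∀ j : ℕ, (β j) ^ 2 =
      ((j * m).factorial : ℝ) * (((j + 1) * m).factorial : ℝ) /
        (((j * m - p).factorial : ℝ)) ^ 2 := by
    intro j
    rw [hβ j, div_pow, Real.sq_sqrt]
    positivity
  have hβnn : ∀ j : ℕ, 0 ≤ β j := by
    intro j; rw [hβ j]; positivity
  apply le_of_pow_le_pow_left₀ two_ne_zero (sq_nonneg _)
  rw [mul_pow, sqβ, sqβ, sqβ, e0]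
  rw [div_mul_div_comm, div_pow, ← pow_mul]
  rw [div_le_div_iff₀ (by positivity) (by positivity)]
  -- natural number inequality
  have s1 : (k + 1) * m - p = c + m := by rw [add_mul, one_mul]; omega
  have s2 : (k + 1 + 1) * m - p = c + 2 * m := by rw [add_mul, add_mul, one_mul]; omega
  have s0 : k * m - p = c := rfl
  have hnat : (k * m).factorial * ((k + 1) * m).factorial *
      (((k + 1 + 1) * m).factorial * ((k + 1 + 1 + 1) * m).factorial) *
      (((k + 1) * m - p).factorial) ^ 4 ≤
      (((k + 1) * m).factorial * ((k + 1 + 1) * m).factorial) ^ 2 *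
      ((k * m - p).factorial ^ 2 * ((k + 1 + 1) * m - p).factorial ^ 2) := by
    have e1 : (k + 1) * m = c + p + m := by rw [add_mul, one_mul]; omega
    have e2 : (k + 1 + 1) * m = c + p + 2 * m := by rw [add_mul, add_mul, one_mul]; omega
    have e3 : (k + 1 + 1 + 1) * m = c + p + 3 * m := by rw [add_mul, add_mul, add_mul, one_mul]; omega
    rw [s0, s1, s2, hkm, e1, e2, e3]
    have := key p m c
    calc (c + p).factorial * (c + p + m).factorial *
          ((c + p + 2 * m).factorial * (c + p + 3 * m).factorial) *
          ((c + m).factorial) ^ 4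
        = ((c + p + m).factorial * (c + p + 2 * m).factorial) *
          ((c + p).factorial * (c + p + 3 * m).factorial * ((c + m).factorial) ^ 4) := by ring
      _ ≤ ((c + p + m).factorial * (c + p + 2 * m).factorial) *
          ((c + p + m).factorial * (c + p + 2 * m).factorial * (c.factorial) ^ 2 *
            ((c + 2 * m).factorial) ^ 2) := Nat.mul_le_mul_left _ this
      _ = ((c + p + m).factorial * (c + p + 2 * m).factorial) ^ 2 *
          (c.factorial ^ 2 * ((c + 2 * m).factorial) ^ 2) := by ring
  calc ((k * m).factorial : ℝ) * (((k + 1) * m).factorial : ℝ) *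
        ((((k + 1 + 1) * m).factorial : ℝ) * (((k + 1 + 1 + 1) * m).factorial : ℝ)) *
        ((((k + 1) * m - p).factorial : ℝ)) ^ (2 * 2)
      = (((k * m).factorial * ((k + 1) * m).factorial *
          (((k + 1 + 1) * m).factorial * ((k + 1 + 1 + 1) * m).factorial) *
          (((k + 1) * m - p).factorial) ^ 4 : ℕ) : ℝ) := by push_cast; ring
    _ ≤ ((((((k + 1) * m).factorial * ((k + 1 + 1) * m).factorial) ^ 2 *
          ((k * m - p).factorial ^ 2 * ((k + 1 + 1) * m - p).factorial ^ 2)) : ℕ) : ℝ) := by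
        exact_mod_cast hnat
    _ = ((((k + 1) * m).factorial : ℝ) * (((k + 1 + 1) * m).factorial : ℝ)) ^ 2 *
        (((k * m - p).factorial : ℝ) ^ 2 * (((k + 1 + 1) * m - p).factorial : ℝ) ^ 2) := by
        push_cast; ring
end
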